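/- arXiv:1212.4898 — 2 statements merged into one kernel-verified Lean document; each statement's English description precedes it below -/
import Mathlib

section
/- If e ~ N(0, σ²) and Δ = σ·Q⁻¹(α/β) with 0 < α < β, then the optimal expected cost satisfies α·Δ + β·E[(e − Δ)⁺] = σ·β·φ(Q⁻¹(α/β)), where φ is the standard normal density. -/
/-!
Substituting `x = σ u` turns the Gaussian expectation into `σ E[(Z - a)⁺]` for a standard normal
`Z`, and `E[(Z - a)⁺] = φ(a) - a Q(a)` because `-φ` is a primitive of `u φ(u)`. Since `Q` is
continuous with limits `1` at `-∞` and `0` at `+∞`, the value `α / β ∈ (0, 1)` is attained, so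
`Q (Q⁻¹ (α / β)) = α / β` and the term `α Δ` cancels against `-β Δ Q(Q⁻¹(α / β))`.
-/

open Real MeasureTheory Set Filter

/-- Standard normal density. -/
noncomputable def stdPdf (x : ℝ) : ℝ := (Real.sqrt (2 * Real.pi))⁻¹ * Real.exp (-x ^ 2 / 2)

/-- Complementary standard normal CDF. -/
noncomputable def Qfun (a : ℝ) : ℝ := ∫ x in Set.Ioi a, stdPdf x

/-- Inverse of the complementary standard normal CDF. -/
noncomputable def Qinv : ℝ → ℝ := Function.invFun Qfun

/-- Density of a centered Gaussian with standard deviation `σ`. -/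
noncomputable def gaussPdf (σ x : ℝ) : ℝ :=
  (σ * Real.sqrt (2 * Real.pi))⁻¹ * Real.exp (-x ^ 2 / (2 * σ ^ 2))

open Topology

lemma stdPdf_eq_gaussianPDFReal : stdPdf = ProbabilityTheory.gaussianPDFReal 0 1 := by
  ext x
  simp [stdPdf, ProbabilityTheory.gaussianPDFReal]

lemma integrable_stdPdf : Integrable stdPdf := by
  rw [stdPdf_eq_gaussianPDFReal]
  exact ProbabilityTheory.integrable_gaussianPDFReal 0 1

lemma integral_stdPdf : ∫ x, stdPdf x = 1 := by
  rw [stdPdf_eq_gaussianPDFReal]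
  exact ProbabilityTheory.integral_gaussianPDFReal_eq_one 0 one_ne_zero

lemma integrable_mul_stdPdf : Integrable fun x ↦ x * stdPdf x := by
  refine ((integrable_mul_exp_neg_mul_sq (by norm_num : (0 : ℝ) < 1 / 2)).const_mul
    (√(2 * π))⁻¹).congr (.of_forall fun x ↦ ?_)
  simp only [stdPdf]
  ring_nf

lemma hasDerivAt_neg_stdPdf (x : ℝ) : HasDerivAt (fun u ↦ -stdPdf u) (x * stdPdf x) x := by
  have hexp : HasDerivAt (fun u : ℝ ↦ -u ^ 2 / 2) (-x) x :=
    (((hasDerivAt_pow 2 x).neg).div_const 2).congr_deriv (by push_cast; ring)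
  exact ((hexp.exp).const_mul (√(2 * π))⁻¹).neg.congr_deriv (by simp only [stdPdf]; ring)

lemma tendsto_stdPdf_atTop : Tendsto stdPdf atTop (𝓝 0) := by
  have hexp : Tendsto (fun x : ℝ ↦ -x ^ 2 / 2) atTop atBot :=
    (tendsto_neg_atTop_atBot.comp (tendsto_pow_atTop two_ne_zero)).atBot_div_const two_pos
  have h := (tendsto_exp_atBot.comp hexp).const_mul (√(2 * π))⁻¹
  rwa [mul_zero] at h

lemma setIntegral_Ioi_mul_stdPdf (a : ℝ) : ∫ x in Ioi a, x * stdPdf x = stdPdf a := by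
  simpa using integral_Ioi_of_hasDerivAt_of_tendsto (m := 0)
    (hasDerivAt_neg_stdPdf a).continuousAt.continuousWithinAt
    (fun x _ ↦ hasDerivAt_neg_stdPdf x) integrable_mul_stdPdf.integrableOn
    (by simpa using tendsto_stdPdf_atTop.neg)

lemma integral_max_sub_mul_stdPdf (a : ℝ) :
    ∫ u, max (u - a) 0 * stdPdf u = stdPdf a - a * Qfun a := by
  have hvanish : ∀ u ∉ Ioi a, max (u - a) 0 * stdPdf u = 0 := fun u hu ↦ by
    rw [max_eq_right (by simpa using hu), zero_mul]
  have hpos :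
      ∫ u in Ioi a, max (u - a) 0 * stdPdf u = ∫ u in Ioi a, (u * stdPdf u - a * stdPdf u) :=
    setIntegral_congr_fun measurableSet_Ioi fun u (hu : a < u) ↦ by
      rw [max_eq_left (by linarith)]
      ring
  rw [← setIntegral_eq_integral_of_forall_compl_eq_zero hvanish, hpos,
    integral_sub integrable_mul_stdPdf.integrableOn (integrable_stdPdf.const_mul a).integrableOn,
    setIntegral_Ioi_mul_stdPdf, integral_const_mul, Qfun]

lemma gaussPdf_mul {σ : ℝ} (hσ : σ ≠ 0) (u : ℝ) : gaussPdf σ (σ * u) = σ⁻¹ * stdPdf u := by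
  have hexp : -(σ * u) ^ 2 / (2 * σ ^ 2) = -u ^ 2 / 2 := by
    field_simp
  rw [gaussPdf, stdPdf, hexp, mul_inv, mul_assoc]

lemma integral_max_sub_mul_gaussPdf {σ : ℝ} (hσ : 0 < σ) (a : ℝ) :
    ∫ x, max (x - σ * a) 0 * gaussPdf σ x = σ * (stdPdf a - a * Qfun a) := by
  have hscale :=
    Measure.integral_comp_mul_left (fun x : ℝ ↦ max (x - σ * a) 0 * gaussPdf σ x) σ
  rw [smul_eq_mul, abs_of_pos (inv_pos.mpr hσ), eq_inv_mul_iff_mul_eq₀ hσ.ne'] at hscale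
  rw [← hscale, ← integral_max_sub_mul_stdPdf]
  congr 1
  refine integral_congr_ae (.of_forall fun u ↦ ?_)
  dsimp only
  have hmax : max (σ * u - σ * a) 0 = σ * max (u - a) 0 := by
    rw [mul_max_of_nonneg _ _ hσ.le, mul_zero, mul_sub]
  rw [hmax, gaussPdf_mul hσ.ne']
  field_simp

lemma Qfun_eq_sub_intervalIntegral (b : ℝ) : Qfun b = Qfun 0 - ∫ x in (0 : ℝ)..b, stdPdf x := by
  have hint := integrable_stdPdf.integrableOn (s := Iic b)
  have hint₀ := integrable_stdPdf.integrableOn (s := Iic 0)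
  have hb := intervalIntegral.integral_Iic_add_Ioi hint integrable_stdPdf.integrableOn
  have h₀ := intervalIntegral.integral_Iic_add_Ioi hint₀ integrable_stdPdf.integrableOn
  rw [← intervalIntegral.integral_Iic_sub_Iic hint₀ hint, Qfun, Qfun]
  linarith

lemma continuous_Qfun : Continuous Qfun :=
  (continuous_const.sub (integrable_stdPdf.continuous_primitive 0)).congr
    fun b ↦ (Qfun_eq_sub_intervalIntegral b).symm

lemma tendsto_Qfun_atTop : Tendsto Qfun atTop (𝓝 0) := by
  have h := intervalIntegral_tendsto_integral_Ioi 0 integrable_stdPdf.integrableOn tendsto_id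
  rw [← sub_self (Qfun 0)]
  exact (tendsto_const_nhds.sub h).congr fun b ↦ (Qfun_eq_sub_intervalIntegral b).symm

lemma tendsto_Qfun_atBot : Tendsto Qfun atBot (𝓝 1) := by
  have h := intervalIntegral_tendsto_integral_Iic 0 integrable_stdPdf.integrableOn tendsto_id
  have htotal : Qfun 0 + ∫ x in Iic 0, stdPdf x = 1 := by
    rw [← integral_stdPdf, add_comm, Qfun]
    exact intervalIntegral.integral_Iic_add_Ioi integrable_stdPdf.integrableOn
      integrable_stdPdf.integrableOn
  rw [← htotal]
  refine (tendsto_const_nhds.add h).congr fun b ↦ ?_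
  rw [Qfun_eq_sub_intervalIntegral b, intervalIntegral.integral_symm, id, sub_eq_add_neg]

lemma Qfun_Qinv {p : ℝ} (hp₀ : 0 < p) (hp₁ : p < 1) : Qfun (Qinv p) = p := by
  have hlt := (tendsto_Qfun_atTop.eventually (eventually_lt_nhds hp₀)).exists
  have hgt := (tendsto_Qfun_atBot.eventually (eventually_gt_nhds hp₁)).exists
  exact Function.invFun_eq <| mem_range_of_exists_le_of_exists_ge continuous_Qfun
    (hlt.imp fun _ ↦ le_of_lt) (hgt.imp fun _ ↦ le_of_lt)

/-- with `e ~ N(0, σ²)` and `Δ = σ Q⁻¹(α/β)`, `0 < α < β`,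
the optimal expected cost satisfies `α Δ + β E[(e − Δ)⁺] = σ β φ(Q⁻¹(α/β))`. -/
theorem stmt2 (α β σ : ℝ) (hα : 0 < α) (hαβ : α < β) (hσ : 0 < σ) :
    α * (σ * Qinv (α / β)) +
        β * ∫ x, max (x - σ * Qinv (α / β)) 0 * gaussPdf σ x
      = σ * β * stdPdf (Qinv (α / β)) := by
  have hβ : 0 < β := hα.trans hαβ
  rw [integral_max_sub_mul_gaussPdf hσ, Qfun_Qinv (div_pos hα hβ) ((div_lt_one hβ).2 hαβ)]
  field_simp
  ring
end

section
/- Let z₁, z₂ be jointly continuous random variables (e.g., bivariate Gaussian with nondegenerate covariance) and 0 < α₁ ≤ α₂ < min(β₁, β₂). Define F(Δ₁, Δ₂) = α₁Δ₁ + α₂Δ₂ + m·E[(z₁+z₂−Δ₁−Δ₂)⁺·1{z₂<Δ₂}] + m·E[(z₁−Δ₁)⁺·1{z₂>Δ₂}] + β₂·E[(z₂−Δ₂)⁺] with m = min(β₁, β₂). Then F is convex in (Δ₁, Δ₂), and any stationary point satisfies the equilibrium equations α₁ = m·P(z₁ > Δ₁, z₁+z₂ > Δ₁+Δ₂) and α₂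 = β₂·P(z₂ > Δ₂) + m·P(z₂ < Δ₂, z₁+z₂ > Δ₁+Δ₂). -/
open Real MeasureTheory Set Filter

/-!
With `u = z₁ - Δ₁` and `v = z₂ - Δ₂`, the second-stage cost is `m (u + v)⁺` for `v < 0` and
`m u⁺ + β₂ v` for `v > 0`, i.e. `m (u + min v 0)⁺ + β₂ v⁺` off the null set `{v = 0}`. Since
`0 ≤ m ≤ β₂`, this equals `max (0, β₂ v, m (u + v), m u + β₂ v)`, a maximum of linear functions;
hence `F` is a linear function plus the expectation of a convex function of `(Δ₁, Δ₂)`.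

The cost is Lipschitz in each `Δᵢ` and differentiable outside the null sets `{z₁ = Δ₁}`,
`{z₂ = Δ₂}`, `{z₁ + z₂ = Δ₁ + Δ₂}`, so the partial derivatives of `F` may be computed under the
integral. Each is `αᵢ` minus the slope of the cost weighted by the probability of the region where
it has that slope, and stationarity gives the two equations.
-/

noncomputable def recourseCost (m β u v : ℝ) : ℝ := m * max (u + min v 0) 0 + β * max v 0

theorem abs_recourseCost_sub_le (m β u v u' v' : ℝ) :
    |recourseCost m β u v - recourseCost m β u' v'| ≤ (|m| + |β|) * (|u - u'| + |v - v'|) := by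
  have h₁ : |max (u + min v 0) 0 - max (u' + min v' 0) 0| ≤ |u - u'| + |v - v'| :=
    calc _ ≤ |u + min v 0 - (u' + min v' 0)| := abs_max_sub_max_le_abs _ _ _
      _ = |(u - u') + (min v 0 - min v' 0)| := by ring_nf
      _ ≤ |u - u'| + |min v 0 - min v' 0| := abs_add_le _ _
      _ ≤ |u - u'| + |v - v'| :=
          add_le_add_right (by simpa using abs_min_sub_min_le_max v 0 v' 0) _
  have h₂ : |max v 0 - max v' 0| ≤ |v - v'| := abs_max_sub_max_le_abs _ _ _
  calc _ = |m * (max (u + min v 0) 0 - max (u' + min v' 0) 0) + β * (max v 0 - max v' 0)| := by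
        unfold recourseCost; ring_nf
    _ ≤ |m| * (|u - u'| + |v - v'|) + |β| * |v - v'| := by
        refine (abs_add_le _ _).trans ?_
        rw [abs_mul, abs_mul]
        gcongr
    _ ≤ _ := by nlinarith [abs_nonneg m, abs_nonneg β, abs_nonneg (u - u'), abs_nonneg (v - v')]

theorem hasDerivAt_max_sub_zero {a t : ℝ} (h : t ≠ a) :
    HasDerivAt (fun x => max (a - x) 0) (-(if t < a then 1 else 0)) t := by
  rcases h.lt_or_gt with h | h
  · rw [if_pos h]
    refine ((hasDerivAt_id t).const_sub a).congr_of_eventuallyEq ?_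
    filter_upwards [eventually_lt_nhds h] with x hx
    exact max_eq_left (by linarith)
  · rw [if_neg h.not_gt, neg_zero]
    refine (hasDerivAt_const t (0 : ℝ)).congr_of_eventuallyEq ?_
    filter_upwards [eventually_gt_nhds h] with x hx
    exact max_eq_right (by linarith)

section RecourseCost

variable {m β : ℝ}

theorem recourseCost_sub_eq_of_ne {a b s t : ℝ} (hb : b ≠ s) :
    recourseCost m β (a - t) (b - s) =
      m * (max (a + b - t - s) 0 * if b < s then 1 else 0)
        + m * (max (a - t) 0 * if s < b then 1 else 0) + β * max (b - s) 0 := by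
  unfold recourseCost
  rcases hb.lt_or_gt with h | h
  · rw [min_eq_left (by linarith), max_eq_right (by linarith : b - s ≤ 0), if_pos h,
      if_neg h.not_gt]
    ring_nf
  · rw [min_eq_right (by linarith), if_neg h.not_gt, if_pos h]
    ring_nf

theorem recourseCost_eq_max (hm : 0 ≤ m) (hmβ : m ≤ β) (u v : ℝ) :
    recourseCost m β u v = max (max 0 (β * v)) (max (m * (u + v)) (m * u + β * v)) := by
  unfold recourseCost
  rcases le_total v 0 with hv | hv
  · rw [min_eq_left hv, max_eq_right hv, mul_zero, add_zero, mul_max_of_nonneg _ _ hm, mul_zero,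
      max_eq_left (by nlinarith : β * v ≤ 0),
      max_eq_left (by nlinarith : m * u + β * v ≤ m * (u + v)), max_comm]
  · rw [min_eq_right hv, add_zero, max_eq_left hv, mul_max_of_nonneg _ _ hm, mul_zero,
      max_eq_right (by nlinarith : 0 ≤ β * v),
      max_eq_right (by nlinarith : m * (u + v) ≤ m * u + β * v), ← max_add_add_right, zero_add,
      max_comm]

theorem convexOn_recourseCost (hm : 0 ≤ m) (hmβ : m ≤ β) :
    ConvexOn ℝ univ (fun p : ℝ × ℝ => recourseCost m β p.1 p.2) := by
  simp only [recourseCost_eq_max hm hmβ]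
  have lin := fun f : ℝ × ℝ →ₗ[ℝ] ℝ => f.convexOn convex_univ
  exact ((convexOn_const 0 convex_univ).sup (lin (β • LinearMap.snd ℝ ℝ ℝ))).sup
    ((lin (m • (LinearMap.fst ℝ ℝ ℝ + LinearMap.snd ℝ ℝ ℝ))).sup
      (lin (m • LinearMap.fst ℝ ℝ ℝ + β • LinearMap.snd ℝ ℝ ℝ)))

theorem convexOn_recourseCost_sub (hm : 0 ≤ m) (hmβ : m ≤ β) (a b : ℝ) :
    ConvexOn ℝ univ (fun p : ℝ × ℝ => recourseCost m β (a - p.1) (b - p.2)) :=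
  (convexOn_recourseCost hm hmβ).comp_affineMap
    (AffineMap.const ℝ (ℝ × ℝ) (a, b) - AffineMap.id ℝ (ℝ × ℝ))

theorem continuous_recourseCost : Continuous (Function.uncurry (recourseCost m β)) := by
  unfold Function.uncurry recourseCost; fun_prop

theorem lipschitzWith_recourseCost_sub_left (a b s : ℝ) :
    LipschitzWith (‖m‖₊ + ‖β‖₊) (fun x => recourseCost m β (a - x) (b - s)) :=
  LipschitzWith.of_dist_le_mul fun x y => by
    simpa [Real.dist_eq, abs_sub_comm x y] using
      abs_recourseCost_sub_le m β (a - x) (b - s) (a - y) (b - s)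

theorem lipschitzWith_recourseCost_sub_right (a b t : ℝ) :
    LipschitzWith (‖m‖₊ + ‖β‖₊) (fun y => recourseCost m β (a - t) (b - y)) :=
  LipschitzWith.of_dist_le_mul fun x y => by
    simpa [Real.dist_eq, abs_sub_comm x y] using
      abs_recourseCost_sub_le m β (a - t) (b - x) (a - t) (b - y)

theorem hasDerivAt_recourseCost_sub_left {a b s t : ℝ} (ha : t ≠ a) (hab : t + s ≠ a + b) :
    HasDerivAt (fun x => recourseCost m β (a - x) (b - s))
      (-(m * if t < a ∧ t + s < a + b then 1 else 0)) t := by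
  have hkink : t ≠ a + min (b - s) 0 := by
    rcases le_total (b - s) 0 with h | h
    · rw [min_eq_left h]; intro e; exact hab (by linarith)
    · rw [min_eq_right h, add_zero]; exact ha
  have hlt : t < a + min (b - s) 0 ↔ t < a ∧ t + s < a + b := by
    rw [add_min, lt_min_iff, add_zero]; constructor <;> rintro ⟨h₁, h₂⟩ <;> constructor <;> linarith
  refine (((hasDerivAt_max_sub_zero hkink).const_mul m).add_const (β * max (b - s) 0))
    |>.congr_of_eventuallyEq (Eventually.of_forall fun x => ?_) |>.congr_deriv ?_
  · unfold recourseCost; ring_nf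
  · simp only [hlt]; split_ifs <;> ring

theorem hasDerivAt_recourseCost_sub_right {a b s t : ℝ} (hb : s ≠ b) (hab : t + s ≠ a + b) :
    HasDerivAt (fun y => recourseCost m β (a - t) (b - y))
      (-(β * (if s < b then 1 else 0) + m * if b < s ∧ t + s < a + b then 1 else 0)) s := by
  rcases hb.lt_or_gt with h | h
  · refine ((((hasDerivAt_id s).const_sub b).const_mul β).const_add (m * max (a - t) 0))
      |>.congr_of_eventuallyEq ?_ |>.congr_deriv ?_
    · filter_upwards [eventually_lt_nhds h] with y hy
      unfold recourseCost
      rw [min_eq_right (by linarith), add_zero, max_eq_left (by linarith : 0 ≤ b - y)]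
      rfl
    · simp [h, h.not_gt]
  · have hlt : s < a + b - t ↔ t + s < a + b := by constructor <;> intro <;> linarith
    have hkink : s ≠ a + b - t := by intro e; apply hab; linarith
    refine ((hasDerivAt_max_sub_zero hkink).const_mul m) |>.congr_of_eventuallyEq ?_ |>.congr_deriv ?_
    · filter_upwards [eventually_gt_nhds h] with y hy
      unfold recourseCost
      rw [min_eq_left (by linarith), max_eq_right (by linarith : b - y ≤ 0), mul_zero, add_zero]
      ring_nf
    · simp only [hlt, h, h.not_gt, true_and, if_false]
      split_ifs <;> ring

end RecourseCost

section Integrals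

variable {Ω : Type*} [MeasurableSpace Ω] {μ : Measure Ω}

theorem integral_ite_one {p : Ω → Prop} [DecidablePred p] (hp : MeasurableSet {ω | p ω}) :
    ∫ ω, (if p ω then (1 : ℝ) else 0) ∂μ = (μ {ω | p ω}).toReal := by
  simpa [Set.indicator_apply, measureReal_def] using integral_indicator_const (μ := μ) (1 : ℝ) hp

theorem MeasureTheory.Integrable.mul_ite_one {f : Ω → ℝ} (hf : Integrable f μ) {p : Ω → Prop}
    [DecidablePred p] (hp : MeasurableSet {ω | p ω}) :
    Integrable (fun ω => f ω * if p ω then 1 else 0) μ :=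
  (hf.indicator hp).congr (Eventually.of_forall fun ω => by simp [Set.indicator_apply])

theorem integrable_ite_one [IsFiniteMeasure μ] {p : Ω → Prop} [DecidablePred p]
    (hp : MeasurableSet {ω | p ω}) : Integrable (fun ω => if p ω then (1 : ℝ) else 0) μ := by
  simpa using (integrable_const (1 : ℝ)).mul_ite_one hp

theorem convexOn_integral {E : Type*} [AddCommGroup E] [Module ℝ E] {s : Set E}
    {f : E → Ω → ℝ} (hs : Convex ℝ s) (hf : ∀ ω, ConvexOn ℝ s (f · ω))
    (hint : ∀ x ∈ s, Integrable (f x) μ) : ConvexOn ℝ s (fun x => ∫ ω, f x ω ∂μ) := by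
  refine ⟨hs, fun x hx y hy a b ha hb hab => ?_⟩
  calc ∫ ω, f (a • x + b • y) ω ∂μ ≤ ∫ ω, (a * f x ω + b * f y ω) ∂μ :=
        integral_mono (hint _ (hs hx hy ha hb hab))
          (((hint x hx).const_mul a).add ((hint y hy).const_mul b))
          fun ω => (hf ω).2 hx hy ha hb hab
    _ = a • ∫ ω, f x ω ∂μ + b • ∫ ω, f y ω ∂μ := by
        rw [integral_add ((hint x hx).const_mul a) ((hint y hy).const_mul b),
          integral_const_mul, integral_const_mul, smul_eq_mul, smul_eq_mul]

theorem hasDerivAt_integral_of_lipschitzWith [IsFiniteMeasure μ] {F : ℝ → Ω → ℝ}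
    {F' : Ω → ℝ} {t : ℝ} {K : NNReal} (hF_meas : ∀ x, AEStronglyMeasurable (F x) μ)
    (hF_int : Integrable (F t) μ) (hF'_meas : AEStronglyMeasurable F' μ)
    (h_lip : ∀ ω, LipschitzWith K (F · ω)) (h_diff : ∀ᵐ ω ∂μ, HasDerivAt (F · ω) (F' ω) t) :
    HasDerivAt (fun x => ∫ ω, F x ω ∂μ) (∫ ω, F' ω ∂μ) t :=
  (hasDerivAt_integral_of_dominated_loc_of_lip (bound := fun _ => (K : ℝ)) univ_mem
    (Eventually.of_forall hF_meas) hF_int hF'_meas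
    (Eventually.of_forall fun ω => by simpa using h_lip ω)
    (integrable_const _) h_diff).2

theorem integrable_recourseCost {m β : ℝ} {X Y : Ω → ℝ} (hX : Integrable X μ)
    (hY : Integrable Y μ) : Integrable (fun ω => recourseCost m β (X ω) (Y ω)) μ := by
  refine Integrable.mono' (((hX.abs.add hY.abs).const_mul (|m| + |β|)))
    (continuous_recourseCost.comp_aestronglyMeasurable₂ hX.1 hY.1)
    (Eventually.of_forall fun ω => ?_)
  simpa [recourseCost] using abs_recourseCost_sub_le m β (X ω) (Y ω) 0 0

end Integrals

section ExpectedRecourse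

variable {Ω : Type*} [MeasurableSpace Ω] {P : Measure Ω} [IsFiniteMeasure P] {z₁ z₂ : Ω → ℝ}
  {m β : ℝ}

theorem integral_recourseCost_eq (hi₁ : Integrable z₁ P) (hi₂ : Integrable z₂ P)
    (hm₂ : Measurable z₂) {s : ℝ} (hc₂ : P {ω | z₂ ω = s} = 0) (t : ℝ) :
    ∫ ω, recourseCost m β (z₁ ω - t) (z₂ ω - s) ∂P =
      m * ∫ ω, max (z₁ ω + z₂ ω - t - s) 0 * (if z₂ ω < s then 1 else 0) ∂P
        + m * ∫ ω, max (z₁ ω - t) 0 * (if s < z₂ ω then 1 else 0) ∂P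
        + β * ∫ ω, max (z₂ ω - s) 0 ∂P := by
  have i₁ : Integrable (fun ω => max (z₁ ω + z₂ ω - t - s) 0 * if z₂ ω < s then 1 else 0) P :=
    (((hi₁.add hi₂).sub (integrable_const t)).sub (integrable_const s)).pos_part.mul_ite_one
      (measurableSet_lt hm₂ measurable_const)
  have i₂ : Integrable (fun ω => max (z₁ ω - t) 0 * if s < z₂ ω then 1 else 0) P :=
    (hi₁.sub (integrable_const t)).pos_part.mul_ite_one (measurableSet_lt measurable_const hm₂)
  have i₃ : Integrable (fun ω => max (z₂ ω - s) 0) P := (hi₂.sub (integrable_const s)).pos_part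
  rw [← integral_const_mul, ← integral_const_mul, ← integral_const_mul,
    ← integral_add (i₁.const_mul m) (i₂.const_mul m), ← integral_add _ (i₃.const_mul β)]
  · refine integral_congr_ae ?_
    filter_upwards [measure_eq_zero_iff_ae_notMem.1 hc₂] with ω hω
    exact recourseCost_sub_eq_of_ne hω
  · exact (i₁.const_mul m).add (i₂.const_mul m)

theorem convexOn_integral_recourseCost (hm : 0 ≤ m) (hmβ : m ≤ β) (hi₁ : Integrable z₁ P)
    (hi₂ : Integrable z₂ P) :
    ConvexOn ℝ univ (fun p : ℝ × ℝ => ∫ ω, recourseCost m β (z₁ ω - p.1) (z₂ ω - p.2) ∂P) :=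
  convexOn_integral convex_univ (fun ω => convexOn_recourseCost_sub hm hmβ (z₁ ω) (z₂ ω))
    fun _ _ => integrable_recourseCost (hi₁.sub (integrable_const _)) (hi₂.sub (integrable_const _))

variable {s t : ℝ}

theorem hasDerivAt_integral_recourseCost_left (hi₁ : Integrable z₁ P) (hi₂ : Integrable z₂ P)
    (hm₁ : Measurable z₁) (hm₂ : Measurable z₂) (hc₁ : P {ω | z₁ ω = t} = 0)
    (hc₁₂ : P {ω | z₁ ω + z₂ ω = t + s} = 0) :
    HasDerivAt (fun x => ∫ ω, recourseCost m β (z₁ ω - x) (z₂ ω - s) ∂P)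
      (-(m * (P {ω | t < z₁ ω ∧ t + s < z₁ ω + z₂ ω}).toReal)) t := by
  have hA : MeasurableSet {ω | t < z₁ ω ∧ t + s < z₁ ω + z₂ ω} :=
    (measurableSet_lt measurable_const hm₁).inter (measurableSet_lt measurable_const (hm₁.add hm₂))
  have key := hasDerivAt_integral_of_lipschitzWith
    (F := fun x ω => recourseCost m β (z₁ ω - x) (z₂ ω - s))
    (F' := fun ω => -(m * if t < z₁ ω ∧ t + s < z₁ ω + z₂ ω then 1 else 0))
    (fun x => (integrable_recourseCost (hi₁.sub (integrable_const x))
      (hi₂.sub (integrable_const s))).1)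
    (integrable_recourseCost (hi₁.sub (integrable_const t)) (hi₂.sub (integrable_const s)))
    ((Measurable.ite hA measurable_const measurable_const).const_mul m).neg.aestronglyMeasurable
    (fun ω => lipschitzWith_recourseCost_sub_left (z₁ ω) (z₂ ω) s)
    (by
      filter_upwards [measure_eq_zero_iff_ae_notMem.1 hc₁, measure_eq_zero_iff_ae_notMem.1 hc₁₂]
        with ω h₁ h₁₂
      exact hasDerivAt_recourseCost_sub_left (Ne.symm h₁) (Ne.symm h₁₂))
  rwa [integral_neg, integral_const_mul, integral_ite_one hA] at key

theorem hasDerivAt_integral_recourseCost_right (hi₁ : Integrable z₁ P) (hi₂ : Integrable z₂ P)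
    (hm₁ : Measurable z₁) (hm₂ : Measurable z₂) (hc₂ : P {ω | z₂ ω = s} = 0)
    (hc₁₂ : P {ω | z₁ ω + z₂ ω = t + s} = 0) :
    HasDerivAt (fun y => ∫ ω, recourseCost m β (z₁ ω - t) (z₂ ω - y) ∂P)
      (-(β * (P {ω | s < z₂ ω}).toReal
        + m * (P {ω | z₂ ω < s ∧ t + s < z₁ ω + z₂ ω}).toReal)) s := by
  have hA : MeasurableSet {ω | s < z₂ ω} := measurableSet_lt measurable_const hm₂
  have hB : MeasurableSet {ω | z₂ ω < s ∧ t + s < z₁ ω + z₂ ω} :=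
    (measurableSet_lt hm₂ measurable_const).inter (measurableSet_lt measurable_const (hm₁.add hm₂))
  have key := hasDerivAt_integral_of_lipschitzWith
    (F := fun y ω => recourseCost m β (z₁ ω - t) (z₂ ω - y))
    (F' := fun ω => -(β * (if s < z₂ ω then 1 else 0)
      + m * if z₂ ω < s ∧ t + s < z₁ ω + z₂ ω then 1 else 0))
    (fun y => (integrable_recourseCost (hi₁.sub (integrable_const t))
      (hi₂.sub (integrable_const y))).1)
    (integrable_recourseCost (hi₁.sub (integrable_const t)) (hi₂.sub (integrable_const s)))
    ((((Measurable.ite hA measurable_const measurable_const).const_mul β).add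
      ((Measurable.ite hB measurable_const measurable_const).const_mul m)).neg.aestronglyMeasurable)
    (fun ω => lipschitzWith_recourseCost_sub_right (z₁ ω) (z₂ ω) t)
    (by
      filter_upwards [measure_eq_zero_iff_ae_notMem.1 hc₂, measure_eq_zero_iff_ae_notMem.1 hc₁₂]
        with ω h₂ h₁₂
      exact hasDerivAt_recourseCost_sub_right (Ne.symm h₂) (Ne.symm h₁₂))
  rwa [integral_neg, integral_add ((integrable_ite_one hA).const_mul β)
    ((integrable_ite_one hB).const_mul m), integral_const_mul, integral_const_mul,
    integral_ite_one hA, integral_ite_one hB] at key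

end ExpectedRecourse

/-- the two-bus first-stage objective `F` (with backflow recourse)
is convex, and any stationary point satisfies the equilibrium equations
`α₁ = m P(z₁ > Δ₁, z₁+z₂ > Δ₁+Δ₂)` and
`α₂ = β₂ P(z₂ > Δ₂) + m P(z₂ < Δ₂, z₁+z₂ > Δ₁+Δ₂)`, `m = min(β₁,β₂)`. -/
theorem stmt9 {Ω : Type*} [MeasurableSpace Ω] (P : Measure Ω) [IsProbabilityMeasure P]
    (z₁ z₂ : Ω → ℝ) (hm1 : Measurable z₁) (hm2 : Measurable z₂)
    (hi1 : Integrable z₁ P) (hi2 : Integrable z₂ P)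
    (hcont1 : ∀ c : ℝ, P {ω | z₁ ω = c} = 0)
    (hcont2 : ∀ c : ℝ, P {ω | z₂ ω = c} = 0)
    (hcont12 : ∀ c : ℝ, P {ω | z₁ ω + z₂ ω = c} = 0)
    (α₁ α₂ β₁ β₂ : ℝ) (hα₁ : 0 < α₁) (hα₁₂ : α₁ ≤ α₂) (hα₂ : α₂ < min β₁ β₂)
    (F : ℝ → ℝ → ℝ)
    (hF : ∀ Δ₁ Δ₂, F Δ₁ Δ₂ = α₁ * Δ₁ + α₂ * Δ₂
      + min β₁ β₂ *
          ∫ ω, max (z₁ ω + z₂ ω - Δ₁ - Δ₂) 0 * (if z₂ ω < Δ₂ then 1 else 0) ∂P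
      + min β₁ β₂ * ∫ ω, max (z₁ ω - Δ₁) 0 * (if Δ₂ < z₂ ω then 1 else 0) ∂P
      + β₂ * ∫ ω, max (z₂ ω - Δ₂) 0 ∂P) :
    ConvexOn ℝ Set.univ (fun p : ℝ × ℝ => F p.1 p.2) ∧
    ∀ Δ₁ Δ₂ : ℝ,
      HasDerivAt (fun t => F t Δ₂) 0 Δ₁ → HasDerivAt (fun t => F Δ₁ t) 0 Δ₂ →
      (α₁ = min β₁ β₂ *
          (P {ω | Δ₁ < z₁ ω ∧ Δ₁ + Δ₂ < z₁ ω + z₂ ω}).toReal ∧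
       α₂ = β₂ * (P {ω | Δ₂ < z₂ ω}).toReal
          + min β₁ β₂ *
              (P {ω | z₂ ω < Δ₂ ∧ Δ₁ + Δ₂ < z₁ ω + z₂ ω}).toReal) := by
  set m := min β₁ β₂
  have hF' : ∀ Δ₁ Δ₂, F Δ₁ Δ₂ =
      α₁ * Δ₁ + α₂ * Δ₂ + ∫ ω, recourseCost m β₂ (z₁ ω - Δ₁) (z₂ ω - Δ₂) ∂P := fun Δ₁ Δ₂ => by
    rw [hF, integral_recourseCost_eq hi1 hi2 hm2 (hcont2 Δ₂)]; ring
  refine ⟨?_, fun Δ₁ Δ₂ h₁ h₂ => ⟨?_, ?_⟩⟩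
  · have hlin : ConvexOn ℝ univ (fun p : ℝ × ℝ => α₁ * p.1 + α₂ * p.2) :=
      (α₁ • LinearMap.fst ℝ ℝ ℝ + α₂ • LinearMap.snd ℝ ℝ ℝ).convexOn convex_univ
    have hG := convexOn_integral_recourseCost (P := P) (by linarith) (min_le_right β₁ β₂) hi1 hi2
    exact (hlin.add hG).congr fun p _ => (hF' p.1 p.2).symm
  · have hG := hasDerivAt_integral_recourseCost_left (m := m) (β := β₂) hi1 hi2 hm1 hm2
      (hcont1 Δ₁) (hcont12 (Δ₁ + Δ₂))
    simp only [hF'] at h₁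
    have := h₁.unique ((((hasDerivAt_id Δ₁).const_mul α₁).add_const (α₂ * Δ₂)).add hG)
    linarith
  · have hG := hasDerivAt_integral_recourseCost_right (m := m) (β := β₂) hi1 hi2 hm1 hm2
      (hcont2 Δ₂) (hcont12 (Δ₁ + Δ₂))
    simp only [hF'] at h₂
    have := h₂.unique ((((hasDerivAt_id Δ₂).const_mul α₂).const_add (α₁ * Δ₁)).add hG)
    linarith
end
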